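/- Let K be a field with char(K) ≠ 2 and consider UJ2 with the classical grading: E0 = span{e11+e22, e11−e22}, E1 = span{e12}. Then for all Y1, Y2, Y3 ∈ E0 and all Z ∈ E1 one has Y1∘(Y2∘(Y3∘Z)) = (1/2)·( Y1∘(Z∘(Y2∘Y3)) + Y2∘(Z∘(Y1∘Y3)) + Y3∘(Z∘(Y1∘Y2)) − Z∘(Y1∘(Y2∘Y3)) ). -/

import Mathlib

open Matrix

noncomputable section

/-- The 2×2 matrices over `K`. -/
abbrev Mat (K : Type*) [Field K] : Type _ := Matrix (Fin 2) (Fin 2) K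

/-- The Jordan product `u∘v = (1/2)(u·v + v·u)`. -/
def jp {K : Type*} [Field K] (u v : Mat K) : Mat K := (1/2 : K) • (u * v + v * u)

/-- The Jordan associator `(u,v,w) = (u∘v)∘w − u∘(v∘w)`. -/
def assoc {K : Type*} [Field K] (u v w : Mat K) : Mat K := jp (jp u v) w - jp u (jp v w)

def oneM (K : Type*) [Field K] : Mat K := !![1, 0; 0, 1]
def aM (K : Type*) [Field K] : Mat K := !![1, 0; 0, -1]
def bM (K : Type*) [Field K] : Mat K := !![0, 1; 0, 0]

/-- Even component of the classical grading: `span{e11+e22, e11−e22}`. -/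
def E0 (K : Type*) [Field K] : Submodule K (Mat K) :=
  Submodule.span K {oneM K, aM K}

/-- Odd component of the classical grading: `span{e12}`. -/
def E1 (K : Type*) [Field K] : Submodule K (Mat K) :=
  Submodule.span K {bM K}

/-!
The even part `E0` consists of diagonal matrices, which commute, so on `E0` the Jordan product
is the ordinary product; and a diagonal `Y` acts on `e12` by the scalar `(Y₁₁ + Y₂₂)/2`. Both sides
therefore become scalar multiples of `Z`, and the claim reduces to a polynomial identity in the
diagonal entries of `Y1, Y2, Y3`.
-/

section

variable {K : Type*} [Field K]

lemma jp_comm (u v : Mat K) : jp u v = jp v u := by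
  rw [jp, jp, add_comm]

lemma jp_smul_right (c : K) (u v : Mat K) : jp u (c • v) = c • jp u v := by
  simp only [jp, mul_smul_comm, smul_mul_assoc, ← smul_add, smul_comm c]

lemma jp_smul_left (c : K) (u v : Mat K) : jp (c • u) v = c • jp u v := by
  rw [jp_comm, jp_smul_right, jp_comm]

lemma jp_eq_mul_of_commute (h2 : (2 : K) ≠ 0) {u v : Mat K} (h : Commute u v) :
    jp u v = u * v := by
  rw [jp, ← h.eq, ← two_smul K, smul_smul, one_div_mul_cancel h2, one_smul]

lemma jp_diagonal_diagonal (h2 : (2 : K) ≠ 0) (d e : Fin 2 → K) :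
    jp (diagonal d) (diagonal e) = diagonal (d * e) := by
  rw [jp_eq_mul_of_commute h2 (commute_diagonal d e), diagonal_mul_diagonal]
  rfl

lemma jp_diagonal_bM (d : Fin 2 → K) :
    jp (diagonal d) (bM K) = ((d 0 + d 1) / 2) • bM K := by
  ext i j
  fin_cases i <;> fin_cases j <;> simp [jp, bM, -cons_mul, mul_apply, Fin.sum_univ_two]
  ring

lemma jp_bM_diagonal (d : Fin 2 → K) :
    jp (bM K) (diagonal d) = ((d 0 + d 1) / 2) • bM K := by
  rw [jp_comm, jp_diagonal_bM]

lemma exists_diagonal_of_mem_E0 {Y : Mat K} (hY : Y ∈ E0 K) :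
    ∃ d : Fin 2 → K, Y = diagonal d := by
  obtain ⟨a, b, rfl⟩ := Submodule.mem_span_pair.mp hY
  refine ⟨![a + b, a - b], ?_⟩
  ext i j
  fin_cases i <;> fin_cases j <;> simp [oneM, aM, sub_eq_add_neg]

end

/-- in `UJ₂` with the classical grading, for even `Y1, Y2, Y3` and odd `Z`:
`Y1∘(Y2∘(Y3∘Z)) = (1/2)·(Y1∘(Z∘(Y2∘Y3)) + Y2∘(Z∘(Y1∘Y3)) + Y3∘(Z∘(Y1∘Y2)) − Z∘(Y1∘(Y2∘Y3)))`. -/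
theorem stmt_14 (K : Type*) [Field K] (hK : ringChar K ≠ 2)
    (Y1 Y2 Y3 : Mat K) (hY1 : Y1 ∈ E0 K) (hY2 : Y2 ∈ E0 K) (hY3 : Y3 ∈ E0 K)
    (Z : Mat K) (hZ : Z ∈ E1 K) :
    jp Y1 (jp Y2 (jp Y3 Z)) =
      (1/2 : K) • (jp Y1 (jp Z (jp Y2 Y3)) + jp Y2 (jp Z (jp Y1 Y3))
        + jp Y3 (jp Z (jp Y1 Y2)) - jp Z (jp Y1 (jp Y2 Y3))) := by
  have h2 : (2 : K) ≠ 0 := Ring.two_ne_zero hK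
  obtain ⟨d1, rfl⟩ := exists_diagonal_of_mem_E0 hY1
  obtain ⟨d2, rfl⟩ := exists_diagonal_of_mem_E0 hY2
  obtain ⟨d3, rfl⟩ := exists_diagonal_of_mem_E0 hY3
  obtain ⟨c, rfl⟩ := Submodule.mem_span_singleton.mp hZ
  simp only [jp_diagonal_diagonal h2, jp_smul_left, jp_smul_right, jp_diagonal_bM,
    jp_bM_diagonal, smul_smul, ← add_smul, ← sub_smul, Pi.mul_apply]
  congr 1
  field_simp
  ring
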